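/- Let (X,μ) be a nonatomic probability space, T a tree on X, q ∈ (0,1), and φ a T-good function. Let A = {I_j}_j be a pairwise disjoint family of elements of S_φ. Then for every β > 0, ∫_{∪_j I_j} (M_T φ)^q dμ ≤ (1/((1−q)β)) · [ (β+1) Σ_j μ(I_j)·y_{I_j}^q − (β+1)^q ∫_{∪_j I_j} φ^q dμ ], where y_{I_j} = Av_{I_j}(φ). -/

import Mathlib

open MeasureTheory Filter Set

noncomputable section

/-- A tree on a probability space, as in the paper. -/
structure DTree (X : Type*) [MeasurableSpace X] (μ : Measure X) where
  mem : Set (Set X)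
  child : Set X → Set (Set X)
  meas : ∀ I ∈ mem, MeasurableSet I
  top_mem : Set.univ ∈ mem
  pos : ∀ I ∈ mem, 0 < μ I
  child_sub_mem : ∀ I ∈ mem, child I ⊆ mem
  child_countable : ∀ I ∈ mem, (child I).Countable
  child_two : ∀ I ∈ mem, ∃ J ∈ child I, ∃ K ∈ child I, J ≠ K
  child_sub : ∀ I ∈ mem, ∀ J ∈ child I, J ⊆ I
  child_disj : ∀ I ∈ mem, (child I).Pairwise Disjoint
  child_union : ∀ I ∈ mem, ⋃₀ child I = I
  generated : ∃ lvl : ℕ → Set (Set X),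
    lvl 0 = {Set.univ} ∧
    (∀ m, lvl (m + 1) = ⋃ I ∈ lvl m, child I) ∧
    mem = ⋃ m, lvl m ∧
    Tendsto (fun m => ⨆ I ∈ lvl m, μ I) atTop (nhds 0)

variable {X : Type*} [MeasurableSpace X]

/-- The average of `φ` over `I`. -/
def trAvg (μ : Measure X) (φ : X → ℝ) (I : Set X) : ℝ :=
  (μ I).toReal⁻¹ * ∫ x in I, φ x ∂μ

/-- The dyadic maximal operator associated with the tree `T`. -/
def trMax (μ : Measure X) (T : DTree X μ) (φ : X → ℝ) (x : X) : ℝ :=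
  sSup {r : ℝ | ∃ I ∈ T.mem, x ∈ I ∧ r = trAvg μ (fun y => |φ y|) I}

/-- The exceptional set `A_φ`. -/
def trBad (μ : Measure X) (T : DTree X μ) (φ : X → ℝ) : Set X :=
  {x | ∀ I ∈ T.mem, x ∈ I → trAvg μ φ I < trMax μ T φ x}

/-- `φ` is `T`-good if the exceptional set `A_φ` is null. -/
def TGood (μ : Measure X) (T : DTree X μ) (φ : X → ℝ) : Prop :=
  μ (trBad μ T φ) = 0

/-- The set `A(φ, I) = {x ∈ X \ A_φ : I_φ(x) = I}`, where `I_φ(x)` is the largest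
element `I` of the tree with `x ∈ I` and `M_T φ x = Av_I(φ)`. -/
def trA (μ : Measure X) (T : DTree X μ) (φ : X → ℝ) (I : Set X) : Set X :=
  {x | x ∉ trBad μ T φ ∧ I ∈ T.mem ∧ x ∈ I ∧ trMax μ T φ x = trAvg μ φ I ∧
    ∀ J ∈ T.mem, x ∈ J → trMax μ T φ x = trAvg μ φ J → J ⊆ I}

/-- The subtree `S_φ`. -/
def trS (μ : Measure X) (T : DTree X μ) (φ : X → ℝ) : Set (Set X) :=
  {I | I ∈ T.mem ∧ 0 < μ (trA μ T φ I)} ∪ {Set.univ}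

/-- `J* = I` : `I` is the smallest element of `S_φ` properly containing `J`. -/
def IsStarOf (μ : Measure X) (T : DTree X μ) (φ : X → ℝ) (J I : Set X) : Prop :=
  I ∈ trS μ T φ ∧ J ⊂ I ∧ ∀ K ∈ trS μ T φ, J ⊂ K → I ⊆ K

/-- `H_q(z) = (1-q) z^q + q z^(q-1)`. -/
def funH (q z : ℝ) : ℝ := (1 - q) * z ^ q + q * z ^ (q - 1)

/-- `ω_q(z) = (H_q⁻¹(z))^q`, with `H_q⁻¹` the inverse of `H_q : [1,∞) → [1,∞)`. -/
def funOmega (q z : ℝ) : ℝ := (Function.invFunOn (funH q) (Set.Ici 1) z) ^ q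

/-- The constant `c = ω_q(((1-q)L^q + qL^(q-1)f)/h)`. -/
def bellC (q f h L : ℝ) : ℝ := funOmega q (((1 - q) * L ^ q + q * L ^ (q - 1) * f) / h)

/-- An extremal sequence for the Bellman function of three variables. -/
def IsExtremal (μ : Measure X) (T : DTree X μ) (q f h L : ℝ) (φ : ℕ → X → ℝ) : Prop :=
  (∀ n x, 0 ≤ φ n x) ∧ (∀ n, Measurable (φ n)) ∧ (∀ n, Integrable (φ n) μ) ∧
  (∀ n, ∫ x, φ n x ∂μ = f) ∧ (∀ n, ∫ x, φ n x ^ q ∂μ = h) ∧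
  Tendsto (fun n => ∫ x, (max (trMax μ T (φ n) x) L) ^ q ∂μ) atTop
    (nhds (bellC q f h L * h))


/-! Fix `I ∈ S_φ` with average `y > 0`. Every ancestor of `I` has average at most `y`, so for
`t > y` the set `I ∩ {M_T φ > t}` is covered, up to a null set, by the maximal elements of `T`
inside `I` with average above `t`; this gives the weak type bound
`t μ(I ∩ {M_T φ > t}) ≤ ∫_{I ∩ {M_T φ > t}} φ`. Feeding it into the layer-cake formula for
`G = max (M_T φ) y` yields `(1 - q) ∫_I G^q + q ∫_I φ G^(q-1) ≤ y^q μ(I)`, and the tangent-line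
inequality `((β + 1) φ)^q ≤ q (β + 1) φ G^(q-1) + (1 - q) G^q` turns this into the claimed bound
on each `I_j`. Summing over the disjoint family gives the theorem. If some `y_j = 0`, then
`φ = 0` a.e. and both sides vanish. -/

open scoped ENNReal

section Analysis

variable {Ω : Type*} [MeasurableSpace Ω]

theorem lintegral_Ioo_rpow {a b r : ℝ} (ha : 0 < a) (hab : a ≤ b) (hr : r ≠ -1) :
    ∫⁻ t in Ioo a b, ENNReal.ofReal (t ^ r) =
      ENNReal.ofReal ((b ^ (r + 1) - a ^ (r + 1)) / (r + 1)) := by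
  have hint : IntegrableOn (fun t : ℝ => t ^ r) (Ioo a b) :=
    (ContinuousOn.integrableOn_Icc (continuousOn_id.rpow_const fun t ht =>
      Or.inl (ha.trans_le ht.1).ne')).mono_set Ioo_subset_Icc_self
  have h0 : 0 ∉ uIcc a b := by
    rw [uIcc_of_le hab]; exact fun h => h.1.not_gt ha
  rw [← ofReal_integral_eq_lintegral_ofReal hint, ← integral_Ioc_eq_integral_Ioo,
    ← intervalIntegral.integral_of_le hab, integral_rpow (Or.inr ⟨hr, h0⟩)]
  filter_upwards [ae_restrict_mem measurableSet_Ioo] with t ht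
    using Real.rpow_nonneg (ha.le.trans ht.1.le) r

theorem lintegral_lintegral_Ioo_eq (ν : Measure Ω) [SFinite ν] {G : Ω → ℝ} (hG : Measurable G)
    {h : ℝ → ℝ≥0∞} (hh : Measurable h) (y : ℝ) :
    ∫⁻ x, (∫⁻ t in Ioo y (G x), h t) ∂ν = ∫⁻ t in Ioi y, h t * ν {x | t < G x} := by
  set E : Set (Ω × ℝ) := {p | y < p.2 ∧ p.2 < G p.1}
  have hE : MeasurableSet E :=
    (measurableSet_lt measurable_const measurable_snd).inter
      (measurableSet_lt measurable_snd (hG.comp measurable_fst))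
  have hF : AEMeasurable (Function.uncurry fun x t => E.indicator (fun p => h p.2) (x, t))
      (ν.prod volume) :=
    ((hh.comp measurable_snd).indicator hE).aemeasurable
  have hsec : ∀ x, ∫⁻ t in Ioo y (G x), h t = ∫⁻ t, E.indicator (fun p => h p.2) (x, t) := by
    intro x
    rw [← lintegral_indicator measurableSet_Ioo]
    rfl
  have hfib : ∀ t, ∫⁻ x, E.indicator (fun p => h p.2) (x, t) ∂ν =
      (Ioi y).indicator (fun t => h t * ν {x | t < G x}) t := by
    intro t
    by_cases ht : y < t
    · rw [indicator_of_mem (show t ∈ Ioi y from ht), ← lintegral_indicator_const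
        (measurableSet_lt measurable_const hG)]
      congr 1 with x
      by_cases hx : t < G x <;> simp [E, ht, hx]
    · rw [indicator_of_notMem (show t ∉ Ioi y from ht)]
      simp [E, ht]
  simp_rw [hsec]
  rw [lintegral_lintegral_swap hF, ← lintegral_indicator measurableSet_Ioi]
  exact lintegral_congr hfib

/-- The right side is the tangent line at `v` of the concave map `s ↦ s ^ q`. -/
theorem rpow_le_tangent {q s v : ℝ} (hq0 : 0 ≤ q) (hq1 : q ≤ 1) (hs : 0 ≤ s) (hv : 0 < v) :
    s ^ q ≤ q * (s * v ^ (q - 1)) + (1 - q) * v ^ q := by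
  have young := Real.geom_mean_le_arith_mean2_weighted (w₁ := q) (w₂ := 1 - q)
    (p₁ := s * v ^ (q - 1)) (p₂ := v ^ q) hq0 (by linarith)
    (mul_nonneg hs (Real.rpow_nonneg hv.le _)) (Real.rpow_nonneg hv.le _) (by ring)
  have hlhs : (s * v ^ (q - 1)) ^ q * (v ^ q) ^ (1 - q) = s ^ q := by
    rw [Real.mul_rpow hs (Real.rpow_nonneg hv.le _), ← Real.rpow_mul hv.le,
      ← Real.rpow_mul hv.le, mul_assoc, ← Real.rpow_add hv,
      show (q - 1) * q + q * (1 - q) = 0 by ring, Real.rpow_zero, mul_one]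
  rwa [hlhs] at young

/-- Applied with `ν = φ dμ` on an element of `S_φ` of average `y`, and `G = max (M_T φ) y`. -/
theorem ofReal_mul_lintegral_rpow_add_le {m ν : Measure Ω} [SFinite m] [SFinite ν] {q y : ℝ}
    (hq0 : 0 < q) (hq1 : q < 1) (hy : 0 < y) {G : Ω → ℝ} (hG : Measurable G)
    (hGy : ∀ x, y ≤ G x) (hν : ν univ ≤ ENNReal.ofReal y * m univ)
    (hweak : ∀ t, y < t → ENNReal.ofReal t * m {x | t < G x} ≤ ν {x | t < G x}) :
    ENNReal.ofReal (1 - q) * ∫⁻ x, ENNReal.ofReal (G x ^ q) ∂m +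
      ∫⁻ x, ENNReal.ofReal (q * G x ^ (q - 1)) ∂ν ≤ ENNReal.ofReal (y ^ q) * m univ := by
  -- `c x = ∫_y^{G x} t^(q-2) dt`
  set c : Ω → ℝ := fun x => (G x ^ (q - 1) - y ^ (q - 1)) / (q - 1)
  have hpow_le : ∀ x, G x ^ (q - 1) ≤ y ^ (q - 1) := fun x =>
    Real.rpow_le_rpow_of_nonpos hy (hGy x) (by linarith)
  have hlayer : ∫⁻ x, ENNReal.ofReal (G x ^ q) ∂m = ENNReal.ofReal (y ^ q) * m univ +
      ENNReal.ofReal q * ∫⁻ t in Ioi y, ENNReal.ofReal (t ^ (q - 1)) * m {x | t < G x} := by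
    rw [← lintegral_lintegral_Ioo_eq m hG (by fun_prop) y,
      ← lintegral_const_mul' _ _ ENNReal.ofReal_ne_top, ← lintegral_const,
      ← lintegral_add_left measurable_const]
    refine lintegral_congr fun x => ?_
    rw [lintegral_Ioo_rpow hy (hGy x) (by linarith), sub_add_cancel,
      ← ENNReal.ofReal_mul hq0.le, mul_div_cancel₀ _ hq0.ne',
      ← ENNReal.ofReal_add (Real.rpow_nonneg hy.le _)
        (sub_nonneg.2 (Real.rpow_le_rpow hy.le (hGy x) hq0.le)), add_sub_cancel]
  have hweak_int : ∫⁻ t in Ioi y, ENNReal.ofReal (t ^ (q - 1)) * m {x | t < G x} ≤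
      ∫⁻ t in Ioi y, ENNReal.ofReal (t ^ (q - 2)) * ν {x | t < G x} := by
    refine lintegral_mono_ae ?_
    filter_upwards [ae_restrict_mem measurableSet_Ioi] with t (ht : y < t)
    have ht0 : 0 < t := hy.trans ht
    calc ENNReal.ofReal (t ^ (q - 1)) * m {x | t < G x}
        = ENNReal.ofReal (t ^ (q - 2)) * (ENNReal.ofReal t * m {x | t < G x}) := by
          rw [← mul_assoc, ← ENNReal.ofReal_mul (Real.rpow_nonneg ht0.le _),
            ← Real.rpow_add_one ht0.ne']
          ring_nf
      _ ≤ ENNReal.ofReal (t ^ (q - 2)) * ν {x | t < G x} := by gcongr; exact hweak t ht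
  have hdensity : ∫⁻ t in Ioi y, ENNReal.ofReal (t ^ (q - 2)) * ν {x | t < G x} =
      ∫⁻ x, ENNReal.ofReal (c x) ∂ν := by
    rw [← lintegral_lintegral_Ioo_eq ν hG (by fun_prop) y]
    refine lintegral_congr fun x => ?_
    rw [lintegral_Ioo_rpow hy (hGy x) (by linarith), show q - 2 + 1 = q - 1 by ring]
  have hpoint : ∀ x, ENNReal.ofReal (1 - q) * (ENNReal.ofReal q * ENNReal.ofReal (c x)) +
      ENNReal.ofReal (q * G x ^ (q - 1)) = ENNReal.ofReal (q * y ^ (q - 1)) := by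
    intro x
    have hc : (1 - q) * (q * c x) = q * (y ^ (q - 1) - G x ^ (q - 1)) := by
      simp only [c]; field_simp [show q - 1 ≠ 0 by linarith]; ring
    rw [← ENNReal.ofReal_mul hq0.le, ← ENNReal.ofReal_mul (by linarith), hc,
      ← ENNReal.ofReal_add (mul_nonneg hq0.le (sub_nonneg.2 (hpow_le x)))
        (mul_nonneg hq0.le (Real.rpow_nonneg (hy.le.trans (hGy x)) _))]
    ring_nf
  have hc_meas : Measurable c := by fun_prop
  calc ENNReal.ofReal (1 - q) * ∫⁻ x, ENNReal.ofReal (G x ^ q) ∂m +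
        ∫⁻ x, ENNReal.ofReal (q * G x ^ (q - 1)) ∂ν
      ≤ ENNReal.ofReal (1 - q) * (ENNReal.ofReal (y ^ q) * m univ +
          ENNReal.ofReal q * ∫⁻ x, ENNReal.ofReal (c x) ∂ν) +
        ∫⁻ x, ENNReal.ofReal (q * G x ^ (q - 1)) ∂ν := by
        rw [hlayer, ← hdensity]; gcongr
    _ = ENNReal.ofReal ((1 - q) * y ^ q) * m univ + ∫⁻ _, ENNReal.ofReal (q * y ^ (q - 1)) ∂ν := by
        rw [mul_add, ← lintegral_const_mul' _ _ ENNReal.ofReal_ne_top,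
          ← lintegral_const_mul' _ _ ENNReal.ofReal_ne_top, add_assoc,
          ← lintegral_add_left (by fun_prop), ← mul_assoc,
          ← ENNReal.ofReal_mul (by linarith)]
        simp only [hpoint]
    _ ≤ ENNReal.ofReal ((1 - q) * y ^ q) * m univ +
        ENNReal.ofReal (q * y ^ (q - 1)) * (ENNReal.ofReal y * m univ) := by
        rw [lintegral_const]; gcongr
    _ = ENNReal.ofReal (y ^ q) * m univ := by
        rw [← mul_assoc, ← ENNReal.ofReal_mul (mul_nonneg hq0.le (Real.rpow_nonneg hy.le _)),
          ← add_mul, ← ENNReal.ofReal_add (mul_nonneg (by linarith) (Real.rpow_nonneg hy.le _))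
            (mul_nonneg (mul_nonneg hq0.le (Real.rpow_nonneg hy.le _)) hy.le),
          mul_assoc, ← Real.rpow_add_one hy.ne']
        ring_nf

theorem ofReal_mul_lintegral_rpow_add_le_of_weak_type {m : Measure Ω} [SFinite m] {q y β : ℝ}
    (hq0 : 0 < q) (hq1 : q < 1) (hy : 0 < y) (hβ : 0 ≤ β) {g w : Ω → ℝ} (hg : Measurable g)
    (hg0 : ∀ x, 0 ≤ g x) (hw : AEMeasurable w m) (hw0 : ∀ x, 0 ≤ w x)
    (hmean : ∫⁻ x, ENNReal.ofReal (w x) ∂m ≤ ENNReal.ofReal y * m univ)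
    (hweak : ∀ t, y < t → ENNReal.ofReal t * m {x | t < g x} ≤
      ∫⁻ x in {x | t < g x}, ENNReal.ofReal (w x) ∂m) :
    ENNReal.ofReal ((1 - q) * β) * ∫⁻ x, ENNReal.ofReal (g x ^ q) ∂m +
      ENNReal.ofReal ((β + 1) ^ q) * ∫⁻ x, ENNReal.ofReal (w x ^ q) ∂m ≤
      ENNReal.ofReal ((β + 1) * y ^ q) * m univ := by
  set G := fun x => max (g x) y
  set W := fun x => ENNReal.ofReal (w x)
  have hG : Measurable G := hg.max measurable_const
  have hG0 : ∀ x, 0 < G x := fun x => hy.trans_le (le_max_right _ _)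
  have hlevel : ∀ t, y < t → {x | t < G x} = {x | t < g x} := by
    intro t ht; ext x; simp [G, ht.not_gt]
  have hkey := ofReal_mul_lintegral_rpow_add_le (m := m) (ν := m.withDensity W) hq0 hq1 hy hG
    (fun x => le_max_right _ _)
    (by rwa [withDensity_apply _ MeasurableSet.univ, Measure.restrict_univ])
    (fun t ht => by rw [hlevel t ht, withDensity_apply']; exact hweak t ht)
  rw [lintegral_withDensity_eq_lintegral_mul₀ hw.ennreal_ofReal (by fun_prop)] at hkey
  simp only [Pi.mul_apply] at hkey
  have hpoint : ∀ x, ENNReal.ofReal ((β + 1) ^ q) * ENNReal.ofReal (w x ^ q) ≤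
      ENNReal.ofReal (β + 1) * (W x * ENNReal.ofReal (q * G x ^ (q - 1))) +
        ENNReal.ofReal (1 - q) * ENNReal.ofReal (G x ^ q) := by
    intro x
    have hβw : 0 ≤ (β + 1) * w x := mul_nonneg (by linarith) (hw0 x)
    have hw0x := hw0 x
    have htangent := rpow_le_tangent hq0.le hq1.le hβw (hG0 x)
    rw [Real.mul_rpow (by linarith) (hw0 x)] at htangent
    have hGq := Real.rpow_nonneg (hG0 x).le q
    have hGq1 := Real.rpow_nonneg (hG0 x).le (q - 1)
    rw [← ENNReal.ofReal_mul (Real.rpow_nonneg (by linarith) _), ← ENNReal.ofReal_mul (hw0 x),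
      ← ENNReal.ofReal_mul (by linarith), ← ENNReal.ofReal_mul (by linarith),
      ← ENNReal.ofReal_add (by positivity) (mul_nonneg (by linarith) hGq)]
    exact ENNReal.ofReal_le_ofReal (by linarith)
  have htangent_int : ENNReal.ofReal ((β + 1) ^ q) * ∫⁻ x, ENNReal.ofReal (w x ^ q) ∂m ≤
      ENNReal.ofReal (β + 1) * ∫⁻ x, W x * ENNReal.ofReal (q * G x ^ (q - 1)) ∂m +
        ENNReal.ofReal (1 - q) * ∫⁻ x, ENNReal.ofReal (G x ^ q) ∂m := by
    rw [← lintegral_const_mul' _ _ ENNReal.ofReal_ne_top,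
      ← lintegral_const_mul' _ _ ENNReal.ofReal_ne_top,
      ← lintegral_const_mul' _ _ ENNReal.ofReal_ne_top,
      ← lintegral_add_right' _ (by fun_prop)]
    exact lintegral_mono hpoint
  have hgG : ∫⁻ x, ENNReal.ofReal (g x ^ q) ∂m ≤ ∫⁻ x, ENNReal.ofReal (G x ^ q) ∂m :=
    lintegral_mono fun x => ENNReal.ofReal_le_ofReal
      (Real.rpow_le_rpow (hg0 x) (le_max_left _ _) hq0.le)
  calc ENNReal.ofReal ((1 - q) * β) * ∫⁻ x, ENNReal.ofReal (g x ^ q) ∂m +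
        ENNReal.ofReal ((β + 1) ^ q) * ∫⁻ x, ENNReal.ofReal (w x ^ q) ∂m
      ≤ ENNReal.ofReal ((1 - q) * β) * ∫⁻ x, ENNReal.ofReal (G x ^ q) ∂m +
        (ENNReal.ofReal (β + 1) * ∫⁻ x, W x * ENNReal.ofReal (q * G x ^ (q - 1)) ∂m +
          ENNReal.ofReal (1 - q) * ∫⁻ x, ENNReal.ofReal (G x ^ q) ∂m) := by
        gcongr
    _ = ENNReal.ofReal (β + 1) * (ENNReal.ofReal (1 - q) * ∫⁻ x, ENNReal.ofReal (G x ^ q) ∂m +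
          ∫⁻ x, W x * ENNReal.ofReal (q * G x ^ (q - 1)) ∂m) := by
        rw [ENNReal.ofReal_mul (by linarith), ENNReal.ofReal_add hβ zero_le_one,
          ENNReal.ofReal_one]
        ring
    _ ≤ ENNReal.ofReal (β + 1) * (ENNReal.ofReal (y ^ q) * m univ) := by gcongr
    _ = ENNReal.ofReal ((β + 1) * y ^ q) * m univ := by
        rw [← mul_assoc, ← ENNReal.ofReal_mul (by linarith)]

theorem mul_toReal_add_mul_toReal_le {a b c : ℝ} (ha : 0 ≤ a) (hb : 0 ≤ b) (hc : 0 ≤ c)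
    {A B S : ℝ≥0∞} (hS : S ≠ ⊤)
    (h : ENNReal.ofReal a * A + ENNReal.ofReal b * B ≤ ENNReal.ofReal c * S) :
    a * A.toReal + b * B.toReal ≤ c * S.toReal := by
  have hRHS : ENNReal.ofReal c * S ≠ ⊤ := ENNReal.mul_ne_top ENNReal.ofReal_ne_top hS
  have hsum := ENNReal.toReal_mono hRHS h
  rwa [ENNReal.toReal_add (ne_top_of_le_ne_top hRHS (le_self_add.trans h))
    (ne_top_of_le_ne_top hRHS (le_add_self.trans h)), ENNReal.toReal_mul, ENNReal.toReal_mul,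
    ENNReal.toReal_mul, ENNReal.toReal_ofReal ha, ENNReal.toReal_ofReal hb,
    ENNReal.toReal_ofReal hc] at hsum

end Analysis

namespace DTree

variable {μ : Measure X} (T : DTree X μ)

def level (m : ℕ) : Set (Set X) := T.generated.choose m

theorem level_zero : T.level 0 = {univ} := T.generated.choose_spec.1

theorem level_succ (m : ℕ) : T.level (m + 1) = ⋃ I ∈ T.level m, T.child I :=
  T.generated.choose_spec.2.1 m

theorem mem_eq_iUnion_level : T.mem = ⋃ m, T.level m := T.generated.choose_spec.2.2.1

theorem tendsto_level : Tendsto (fun m => ⨆ I ∈ T.level m, μ I) atTop (nhds 0) :=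
  T.generated.choose_spec.2.2.2

theorem level_subset_mem (m : ℕ) : T.level m ⊆ T.mem := by
  rw [mem_eq_iUnion_level]; exact subset_iUnion _ m

theorem pairwise_disjoint_level (m : ℕ) : (T.level m).Pairwise Disjoint := by
  induction m with
  | zero => rw [level_zero]; exact pairwise_singleton _ _
  | succ m ih =>
    rw [level_succ]
    intro I hI J hJ hIJ
    simp only [mem_iUnion] at hI hJ
    obtain ⟨P, hP, hIP⟩ := hI
    obtain ⟨Q, hQ, hJQ⟩ := hJ
    obtain rfl | hPQ := eq_or_ne P Q
    · exact T.child_disj P (T.level_subset_mem m hP) hIP hJQ hIJ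
    · exact (ih hP hQ hPQ).mono (T.child_sub P (T.level_subset_mem m hP) I hIP)
        (T.child_sub Q (T.level_subset_mem m hQ) J hJQ)

theorem exists_superset_of_mem_level {m n : ℕ} (hmn : m ≤ n) {J : Set X}
    (hJ : J ∈ T.level n) : ∃ I ∈ T.level m, J ⊆ I := by
  induction n, hmn using Nat.le_induction generalizing J with
  | base => exact ⟨J, hJ, subset_rfl⟩
  | succ n _ ih =>
    rw [level_succ] at hJ
    simp only [mem_iUnion] at hJ
    obtain ⟨P, hP, hJP⟩ := hJ
    obtain ⟨I, hI, hPI⟩ := ih hP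
    exact ⟨I, hI, (T.child_sub P (T.level_subset_mem n hP) J hJP).trans hPI⟩

theorem subset_or_disjoint_of_mem_level {m n : ℕ} (hmn : m ≤ n) {I J : Set X}
    (hI : I ∈ T.level m) (hJ : J ∈ T.level n) : J ⊆ I ∨ Disjoint I J := by
  obtain ⟨K, hK, hJK⟩ := T.exists_superset_of_mem_level hmn hJ
  obtain rfl | hIK := eq_or_ne I K
  · exact Or.inl hJK
  · exact Or.inr ((T.pairwise_disjoint_level m hI hK hIK).mono_right hJK)

theorem subset_or_subset_or_disjoint {I J : Set X} (hI : I ∈ T.mem) (hJ : J ∈ T.mem) :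
    I ⊆ J ∨ J ⊆ I ∨ Disjoint I J := by
  rw [mem_eq_iUnion_level, mem_iUnion] at hI hJ
  obtain ⟨m, hIm⟩ := hI
  obtain ⟨n, hJn⟩ := hJ
  rcases le_total m n with h | h
  · rcases T.subset_or_disjoint_of_mem_level h hIm hJn with h' | h' <;> simp [h']
  · rcases T.subset_or_disjoint_of_mem_level h hJn hIm with h' | h'
    · exact Or.inl h'
    · exact Or.inr (Or.inr h'.symm)

theorem countable_mem : T.mem.Countable := by
  rw [mem_eq_iUnion_level]
  refine countable_iUnion fun m => ?_
  induction m with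
  | zero => rw [level_zero]; exact countable_singleton _
  | succ m ih =>
    rw [level_succ]
    exact ih.biUnion fun I hI => T.child_countable I (T.level_subset_mem m hI)

/-- Only finitely many levels contain a set of measure `≥ μ J`, and each level holds at most one
superset of `J`. -/
theorem finite_setOf_superset {J : Set X} (hJ : J ∈ T.mem) :
    {K | K ∈ T.mem ∧ J ⊆ K}.Finite := by
  obtain ⟨M, hM⟩ := (T.tendsto_level.eventually_lt_const (T.pos J hJ)).exists_forall_of_atTop
  obtain ⟨x, hx⟩ := nonempty_of_measure_ne_zero (T.pos J hJ).ne'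
  refine ((finite_Iio M).biUnion fun m _ =>
    (?_ : {K | K ∈ T.level m ∧ J ⊆ K}.Subsingleton).finite).subset ?_
  · rintro K ⟨hK, hJK⟩ K' ⟨hK', hJK'⟩
    by_contra hne
    exact (T.pairwise_disjoint_level m hK hK' hne).ne_of_mem (hJK hx) (hJK' hx) rfl
  · rintro K ⟨hK, hJK⟩
    rw [mem_eq_iUnion_level, mem_iUnion] at hK
    obtain ⟨m, hKm⟩ := hK
    have hmM : m < M := by
      by_contra! h
      exact ((measure_mono hJK).trans (le_biSup _ hKm)).not_gt (hM m h)
    exact mem_iUnion₂.2 ⟨m, hmM, hKm, hJK⟩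

theorem exists_pairwise_disjoint_sUnion_eq {𝒥 : Set (Set X)} (h𝒥 : 𝒥 ⊆ T.mem) :
    ∃ 𝒦 ⊆ 𝒥, 𝒦.Pairwise Disjoint ∧ ⋃₀ 𝒦 = ⋃₀ 𝒥 := by
  set 𝒦 := {J ∈ 𝒥 | ∀ K ∈ 𝒥, J ⊆ K → J = K}
  refine ⟨𝒦, sep_subset _ _, ?_, (sUnion_mono (sep_subset _ _)).antisymm ?_⟩
  · intro J hJ K hK hne
    rcases T.subset_or_subset_or_disjoint (h𝒥 hJ.1) (h𝒥 hK.1) with h | h | h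
    · exact absurd (hJ.2 K hK.1 h) hne
    · exact absurd (hK.2 J hJ.1 h).symm hne
    · exact h
  · rintro x ⟨J, hJ, hxJ⟩
    have hfin : {K ∈ 𝒥 | J ⊆ K}.Finite :=
      (T.finite_setOf_superset (h𝒥 hJ)).subset fun K hK => ⟨h𝒥 hK.1, hK.2⟩
    obtain ⟨K₀, hK₀, hmax⟩ := hfin.exists_maximalFor id _ ⟨J, hJ, subset_rfl⟩
    exact ⟨K₀, ⟨hK₀.1, fun K hK hK₀K =>
      hK₀K.antisymm (hmax ⟨hK, hK₀.2.trans hK₀K⟩ hK₀K)⟩, hK₀.2 hxJ⟩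

end DTree

section MaximalFunction

variable {μ : Measure X}

theorem setIntegral_eq_trAvg_mul {f : X → ℝ} {J : Set X} (hJ0 : μ J ≠ 0) (hJ : μ J ≠ ⊤) :
    ∫ x in J, f x ∂μ = trAvg μ f J * (μ J).toReal := by
  rw [trAvg, mul_comm, ← mul_assoc, mul_inv_cancel₀ (ENNReal.toReal_pos hJ0 hJ).ne', one_mul]

theorem setLIntegral_ofReal_eq_trAvg_mul {f : X → ℝ} (hf0 : ∀ x, 0 ≤ f x) {J : Set X}
    (hf : IntegrableOn f J μ) (hJ0 : μ J ≠ 0) (hJ : μ J ≠ ⊤) :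
    ∫⁻ x in J, ENNReal.ofReal (f x) ∂μ = ENNReal.ofReal (trAvg μ f J) * μ J := by
  rw [← ofReal_integral_eq_lintegral_ofReal hf (ae_of_all _ hf0), setIntegral_eq_trAvg_mul hJ0 hJ,
    ENNReal.ofReal_mul' ENNReal.toReal_nonneg, ENNReal.ofReal_toReal hJ]

theorem trAvg_nonneg {f : X → ℝ} (hf0 : ∀ x, 0 ≤ f x) (J : Set X) : 0 ≤ trAvg μ f J :=
  mul_nonneg (inv_nonneg.2 ENNReal.toReal_nonneg) (integral_nonneg hf0)

variable (T : DTree X μ)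

theorem ofReal_mul_measure_sUnion_le [IsFiniteMeasure μ] {f : X → ℝ} (hf0 : ∀ x, 0 ≤ f x)
    (hf : Integrable f μ) {c : ℝ} {𝒥 : Set (Set X)} (h𝒥 : 𝒥 ⊆ T.mem)
    (hc : ∀ J ∈ 𝒥, c ≤ trAvg μ f J) :
    ENNReal.ofReal c * μ (⋃₀ 𝒥) ≤ ∫⁻ x in ⋃₀ 𝒥, ENNReal.ofReal (f x) ∂μ := by
  obtain ⟨𝒦, h𝒦𝒥, hdisj, hunion⟩ := T.exists_pairwise_disjoint_sUnion_eq h𝒥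
  have : Countable 𝒦 := (T.countable_mem.mono (h𝒦𝒥.trans h𝒥)).to_subtype
  have hmeas : ∀ K : 𝒦, MeasurableSet (K : Set X) := fun K => T.meas K (h𝒥 (h𝒦𝒥 K.2))
  have hdisj' : Pairwise (Function.onFun Disjoint fun K : 𝒦 => (K : Set X)) :=
    fun K K' hne => hdisj K.2 K'.2 (Subtype.coe_injective.ne hne)
  rw [← hunion, sUnion_eq_iUnion, measure_iUnion hdisj' hmeas, lintegral_iUnion hmeas hdisj',
    ← ENNReal.tsum_mul_left]
  refine ENNReal.tsum_le_tsum fun K => ?_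
  have hK := h𝒥 (h𝒦𝒥 K.2)
  rw [setLIntegral_ofReal_eq_trAvg_mul hf0 hf.integrableOn (T.pos K hK).ne' (measure_ne_top μ _)]
  gcongr
  exact hc K (h𝒦𝒥 K.2)

variable (μ) in
/-- On this set `trMax` is the `sSup` of an unbounded set of reals, which is `0`. -/
def unboundedSet (φ : X → ℝ) : Set X :=
  ⋂ n : ℕ, ⋃₀ {J | J ∈ T.mem ∧ (n : ℝ) < trAvg μ (fun y => |φ y|) J}

variable {T} {φ : X → ℝ} {x : X}

theorem mem_unboundedSet_iff : x ∈ unboundedSet μ T φ ↔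
    ¬ BddAbove {r | ∃ I ∈ T.mem, x ∈ I ∧ r = trAvg μ (fun y => |φ y|) I} := by
  simp only [unboundedSet, mem_iInter, mem_sUnion, mem_ofPred_eq, bddAbove_def, not_exists,
    not_forall, not_le]
  constructor
  · intro h b
    obtain ⟨n, hn⟩ := exists_nat_gt b
    obtain ⟨J, ⟨hJ, hnJ⟩, hxJ⟩ := h n
    exact ⟨_, ⟨J, hJ, hxJ, rfl⟩, hn.trans hnJ⟩
  · intro h n
    obtain ⟨_, ⟨J, hJ, hxJ, rfl⟩, hnJ⟩ := h n
    exact ⟨J, ⟨hJ, hnJ⟩, hxJ⟩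

theorem trAvg_le_trMax (hx : x ∉ unboundedSet μ T φ) {J : Set X} (hJ : J ∈ T.mem) (hxJ : x ∈ J) :
    trAvg μ (fun y => |φ y|) J ≤ trMax μ T φ x :=
  le_csSup (not_not.1 (mem_unboundedSet_iff.not.1 hx)) ⟨J, hJ, hxJ, rfl⟩

theorem trMax_nonneg : 0 ≤ trMax μ T φ x := by
  by_cases hx : x ∈ unboundedSet μ T φ
  · rw [trMax, Real.sSup_of_not_bddAbove (mem_unboundedSet_iff.1 hx)]
  · exact (trAvg_nonneg (fun y => abs_nonneg (φ y)) univ).trans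
      (trAvg_le_trMax hx T.top_mem (mem_univ x))

theorem lt_trMax_iff {c : ℝ} (hc : 0 ≤ c) : c < trMax μ T φ x ↔
    x ∉ unboundedSet μ T φ ∧ ∃ J ∈ T.mem, x ∈ J ∧ c < trAvg μ (fun y => |φ y|) J := by
  constructor
  · intro h
    have hx : x ∉ unboundedSet μ T φ := fun hx => by
      rw [trMax, Real.sSup_of_not_bddAbove (mem_unboundedSet_iff.1 hx)] at h
      exact h.not_ge hc
    have hne : {r | ∃ I ∈ T.mem, x ∈ I ∧ r = trAvg μ (fun y => |φ y|) I}.Nonempty :=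
      ⟨_, univ, T.top_mem, mem_univ x, rfl⟩
    obtain ⟨_, ⟨J, hJ, hxJ, rfl⟩, hcJ⟩ := exists_lt_of_lt_csSup hne h
    exact ⟨hx, J, hJ, hxJ, hcJ⟩
  · rintro ⟨hx, J, hJ, hxJ, hcJ⟩
    exact hcJ.trans_le (trAvg_le_trMax hx hJ hxJ)

theorem measurableSet_unboundedSet : MeasurableSet (unboundedSet μ T φ) :=
  .iInter fun _ => .sUnion (T.countable_mem.mono (sep_subset _ _)) fun J hJ => T.meas J hJ.1

theorem measurable_trMax : Measurable (trMax μ T φ) := by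
  refine measurable_of_Ioi fun c => ?_
  rcases lt_or_ge c 0 with hc | hc
  · convert MeasurableSet.univ
    exact eq_univ_of_forall fun x => hc.trans_le trMax_nonneg
  · have : trMax μ T φ ⁻¹' Ioi c = (unboundedSet μ T φ)ᶜ ∩
        ⋃₀ {J | J ∈ T.mem ∧ c < trAvg μ (fun y => |φ y|) J} := by
      ext x
      simp only [mem_preimage, mem_Ioi, lt_trMax_iff hc, mem_inter_iff, mem_compl_iff,
        mem_sUnion, mem_ofPred_eq]
      aesop
    rw [this]
    exact measurableSet_unboundedSet.compl.inter
      (.sUnion (T.countable_mem.mono (sep_subset _ _)) fun J hJ => T.meas J hJ.1)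

variable (T) in
theorem measure_unboundedSet [IsFiniteMeasure μ] (hφ : Integrable φ μ) :
    μ (unboundedSet μ T φ) = 0 := by
  set C := ∫⁻ x, ENNReal.ofReal |φ x| ∂μ
  have hbound : ∀ n : ℕ, (n : ℝ≥0∞) * μ (unboundedSet μ T φ) ≤ C := by
    intro n
    set 𝒥 := {J | J ∈ T.mem ∧ (n : ℝ) < trAvg μ (fun y => |φ y|) J}
    calc (n : ℝ≥0∞) * μ (unboundedSet μ T φ) ≤ ENNReal.ofReal n * μ (⋃₀ 𝒥) := by
          rw [ENNReal.ofReal_natCast]; gcongr; exact iInter_subset _ n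
      _ ≤ ∫⁻ x in ⋃₀ 𝒥, ENNReal.ofReal |φ x| ∂μ :=
          ofReal_mul_measure_sUnion_le T (fun y => abs_nonneg (φ y)) hφ.abs (fun J hJ => hJ.1)
            fun J hJ => hJ.2.le
      _ ≤ C := setLIntegral_le_lintegral _ _
  by_contra hpos
  obtain ⟨n, hn⟩ := ENNReal.exists_nat_gt (ENNReal.div_lt_top hφ.abs.lintegral_lt_top.ne hpos).ne
  exact (hbound n).not_gt ((ENNReal.div_lt_iff (Or.inl hpos) (Or.inl (measure_ne_top μ _))).1 hn)

theorem trMax_eq_zero_of_ae_eq_zero (hφ : φ =ᵐ[μ] 0) : trMax μ T φ x = 0 := by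
  have habs : (fun y => |φ y|) =ᵐ[μ] 0 := hφ.mono fun y hy => by simp [hy]
  have havg : ∀ J, trAvg μ (fun y => |φ y|) J = 0 := fun J => by
    rw [trAvg, integral_congr_ae (ae_restrict_of_ae habs)]; simp
  have : {r | ∃ I ∈ T.mem, x ∈ I ∧ r = trAvg μ (fun y => |φ y|) I} = {0} := by
    ext r
    simp only [havg, mem_ofPred_eq, mem_singleton_iff]
    exact ⟨fun ⟨_, _, _, hr⟩ => hr, fun hr => ⟨univ, T.top_mem, mem_univ x, hr⟩⟩
  rw [trMax, this, csSup_singleton]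

end MaximalFunction

section SubtreeS

variable {μ : Measure X} {T : DTree X μ} {φ : X → ℝ} {I₀ : Set X}

theorem trS_subset_mem : trS μ T φ ⊆ T.mem := by
  rintro I (⟨hI, -⟩ | rfl)
  exacts [hI, T.top_mem]

variable [IsFiniteMeasure μ]

/-- An element of `S_φ` carries the maximal average of `φ` along its ancestors, because it is
`I_φ(z)` for some point `z` where `M_T φ` is finite. -/
theorem trAvg_le_of_mem_trS (h0 : ∀ x, 0 ≤ φ x) (hφ : Integrable φ μ) (hI : I₀ ∈ trS μ T φ)
    {J : Set X} (hJ : J ∈ T.mem) (hIJ : I₀ ⊆ J) :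
    trAvg μ (fun y => |φ y|) J ≤ trAvg μ φ I₀ := by
  rcases hI with ⟨-, hpos⟩ | rfl
  · obtain ⟨z, hzA, hz⟩ : (trA μ T φ I₀ \ unboundedSet μ T φ).Nonempty :=
      nonempty_of_measure_ne_zero
        (by rw [measure_sdiff_null (measure_unboundedSet T hφ)]; exact hpos.ne')
    obtain ⟨-, -, hzI, hzmax, -⟩ := hzA
    exact hzmax ▸ trAvg_le_trMax hz hJ (hIJ hzI)
  · rw [univ_subset_iff.1 hIJ, funext fun y => abs_of_nonneg (h0 y)]

/-- Cover `I₀ ∩ {M_T φ > t}` by the maximal elements of `T` inside `I₀` with average `> t`; no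
ancestor of `I₀` qualifies, as `t` exceeds its average. -/
theorem ofReal_mul_restrict_lt_trMax_le (h0 : ∀ x, 0 ≤ φ x) (hφ : Integrable φ μ)
    (hI : I₀ ∈ trS μ T φ) {t : ℝ} (ht : trAvg μ φ I₀ < t) :
    ENNReal.ofReal t * μ.restrict I₀ {x | t < trMax μ T φ x} ≤
      ∫⁻ x in {x | t < trMax μ T φ x}, ENNReal.ofReal (φ x) ∂μ.restrict I₀ := by
  have habs : (fun y => |φ y|) = φ := funext fun y => abs_of_nonneg (h0 y)
  have ht0 : 0 ≤ t := (trAvg_nonneg h0 I₀).trans ht.le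
  set D : Set X := {x | t < trMax μ T φ x}
  have hD : MeasurableSet D := measurableSet_lt measurable_const measurable_trMax
  set 𝒥 := {J | J ∈ T.mem ∧ J ⊆ I₀ ∧ t < trAvg μ φ J}
  have hcover : D ∩ I₀ ⊆ ⋃₀ 𝒥 := by
    rintro x ⟨hx, hxI⟩
    obtain ⟨-, J, hJ, hxJ, htJ⟩ := (lt_trMax_iff ht0).1 hx
    rw [habs] at htJ
    refine ⟨J, ⟨hJ, ?_, htJ⟩, hxJ⟩
    rcases T.subset_or_subset_or_disjoint hJ (trS_subset_mem hI) with h | h | h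
    · exact h
    · have hJle := trAvg_le_of_mem_trS h0 hφ hI hJ h
      rw [habs] at hJle
      exact absurd (ht.trans htJ) hJle.not_gt
    · exact absurd hxI (disjoint_left.1 h hxJ)
  have hae : ⋃₀ 𝒥 ≤ᵐ[μ] (D ∩ I₀ : Set X) := by
    refine ae_le_set.2 (measure_mono_null ?_ (measure_unboundedSet T hφ))
    rintro x ⟨⟨J, ⟨hJ, hJI, htJ⟩, hxJ⟩, hxD⟩
    by_contra hx
    exact hxD ⟨(lt_trMax_iff ht0).2 ⟨hx, J, hJ, hxJ, by rwa [habs]⟩, hJI hxJ⟩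
  rw [Measure.restrict_apply hD, Measure.restrict_restrict hD]
  calc ENNReal.ofReal t * μ (D ∩ I₀) ≤ ENNReal.ofReal t * μ (⋃₀ 𝒥) := by gcongr
    _ ≤ ∫⁻ x in ⋃₀ 𝒥, ENNReal.ofReal (φ x) ∂μ :=
        ofReal_mul_measure_sUnion_le T h0 hφ (fun J hJ => hJ.1) fun J hJ => hJ.2.2.le
    _ ≤ ∫⁻ x in D ∩ I₀, ENNReal.ofReal (φ x) ∂μ := lintegral_mono_set' hae

theorem ae_eq_zero_of_trAvg_eq_zero (h0 : ∀ x, 0 ≤ φ x) (hφ : Integrable φ μ)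
    (hI : I₀ ∈ trS μ T φ) (hy : trAvg μ φ I₀ = 0) : φ =ᵐ[μ] 0 := by
  have havg : trAvg μ φ univ = 0 := by
    refine le_antisymm ?_ (trAvg_nonneg h0 univ)
    have := trAvg_le_of_mem_trS h0 hφ hI T.top_mem (subset_univ _)
    rwa [funext fun y => abs_of_nonneg (h0 y), hy] at this
  refine (integral_eq_zero_iff_of_nonneg h0 hφ).1 ?_
  rw [← setIntegral_univ, setIntegral_eq_trAvg_mul (T.pos univ T.top_mem).ne' (measure_ne_top μ _),
    havg, zero_mul]

variable {q β : ℝ}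

theorem ofReal_mul_setLIntegral_rpow_add_le (hq0 : 0 < q) (hq1 : q < 1) (h0 : ∀ x, 0 ≤ φ x)
    (hφ : Integrable φ μ) (hI : I₀ ∈ trS μ T φ) (hβ : 0 ≤ β) :
    ENNReal.ofReal ((1 - q) * β) * ∫⁻ x in I₀, ENNReal.ofReal (trMax μ T φ x ^ q) ∂μ +
      ENNReal.ofReal ((β + 1) ^ q) * ∫⁻ x in I₀, ENNReal.ofReal (φ x ^ q) ∂μ ≤
      ENNReal.ofReal ((β + 1) * trAvg μ φ I₀ ^ q) * μ I₀ := by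
  rcases (trAvg_nonneg h0 I₀).eq_or_lt with hy | hy
  · have hzero := ae_eq_zero_of_trAvg_eq_zero h0 hφ hI hy.symm
    have hφq : (fun x => ENNReal.ofReal (φ x ^ q)) =ᵐ[μ] 0 :=
      hzero.mono fun x hx => by simp [hx, Real.zero_rpow hq0.ne']
    simp [trMax_eq_zero_of_ae_eq_zero hzero, Real.zero_rpow hq0.ne',
      lintegral_congr_ae (ae_restrict_of_ae hφq)]
  · have hmean : ∫⁻ x, ENNReal.ofReal (φ x) ∂μ.restrict I₀ ≤
        ENNReal.ofReal (trAvg μ φ I₀) * μ.restrict I₀ univ := by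
      rw [Measure.restrict_apply_univ, setLIntegral_ofReal_eq_trAvg_mul h0 hφ.integrableOn
        (T.pos _ (trS_subset_mem hI)).ne' (measure_ne_top μ _)]
    have := ofReal_mul_lintegral_rpow_add_le_of_weak_type (m := μ.restrict I₀) hq0 hq1 hy hβ
      measurable_trMax (fun _ => trMax_nonneg) hφ.aemeasurable.restrict h0 hmean
      fun t ht => ofReal_mul_restrict_lt_trMax_le h0 hφ hI ht
    rwa [Measure.restrict_apply_univ] at this

variable {ι : Type*} [Countable ι] {I : ι → Set X}

theorem ofReal_mul_setLIntegral_iUnion_rpow_add_le (hq0 : 0 < q) (hq1 : q < 1)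
    (h0 : ∀ x, 0 ≤ φ x) (hφ : Integrable φ μ) (hmem : ∀ j, I j ∈ trS μ T φ)
    (hdisj : Pairwise (Function.onFun Disjoint I)) (hβ : 0 ≤ β) :
    ENNReal.ofReal ((1 - q) * β) * ∫⁻ x in ⋃ j, I j, ENNReal.ofReal (trMax μ T φ x ^ q) ∂μ +
      ENNReal.ofReal ((β + 1) ^ q) * ∫⁻ x in ⋃ j, I j, ENNReal.ofReal (φ x ^ q) ∂μ ≤
      ENNReal.ofReal (β + 1) * ∑' j, μ (I j) * ENNReal.ofReal (trAvg μ φ (I j) ^ q) := by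
  have hmeas : ∀ j, MeasurableSet (I j) := fun j => T.meas _ (trS_subset_mem (hmem j))
  rw [lintegral_iUnion hmeas hdisj, lintegral_iUnion hmeas hdisj, ← ENNReal.tsum_mul_left,
    ← ENNReal.tsum_mul_left, ← ENNReal.tsum_add, ← ENNReal.tsum_mul_left]
  refine ENNReal.tsum_le_tsum fun j =>
    (ofReal_mul_setLIntegral_rpow_add_le hq0 hq1 h0 hφ (hmem j) hβ).trans_eq ?_
  rw [ENNReal.ofReal_mul (by linarith), mul_assoc, mul_comm (μ (I j))]

theorem tsum_measure_mul_ofReal_trAvg_rpow_ne_top (hq0 : 0 ≤ q) (hq1 : q ≤ 1)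
    (h0 : ∀ x, 0 ≤ φ x) (hφ : Integrable φ μ) (hmem : ∀ j, I j ∈ T.mem)
    (hdisj : Pairwise (Function.onFun Disjoint I)) :
    ∑' j, μ (I j) * ENNReal.ofReal (trAvg μ φ (I j) ^ q) ≠ ⊤ := by
  have hmeas : ∀ j, MeasurableSet (I j) := fun j => T.meas _ (hmem j)
  have hle : ∀ j, μ (I j) * ENNReal.ofReal (trAvg μ φ (I j) ^ q) ≤
      μ (I j) + ∫⁻ x in I j, ENNReal.ofReal (φ x) ∂μ := by
    intro j
    have hy := trAvg_nonneg (μ := μ) h0 (I j)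
    have hpow : trAvg μ φ (I j) ^ q ≤ 1 + trAvg μ φ (I j) := by
      rcases le_total (trAvg μ φ (I j)) 1 with h | h
      · linarith [Real.rpow_le_one hy h hq0]
      · linarith [Real.rpow_le_self_of_one_le h hq1]
    rw [setLIntegral_ofReal_eq_trAvg_mul h0 hφ.integrableOn (T.pos _ (hmem j)).ne'
      (measure_ne_top μ _)]
    calc μ (I j) * ENNReal.ofReal (trAvg μ φ (I j) ^ q)
        ≤ μ (I j) * ENNReal.ofReal (1 + trAvg μ φ (I j)) := by gcongr
      _ = μ (I j) + ENNReal.ofReal (trAvg μ φ (I j)) * μ (I j) := by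
        rw [ENNReal.ofReal_add zero_le_one hy, ENNReal.ofReal_one, mul_add, mul_one, mul_comm]
  refine ne_top_of_le_ne_top ?_ (ENNReal.tsum_le_tsum hle)
  rw [ENNReal.tsum_add, ← measure_iUnion hdisj hmeas, ← lintegral_iUnion hmeas hdisj]
  exact ENNReal.add_ne_top.2 ⟨measure_ne_top μ _, hφ.restrict.lintegral_lt_top.ne⟩

end SubtreeS

theorem statement13_general {X : Type*} [MeasurableSpace X] (μ : Measure X)
    [IsProbabilityMeasure μ] (T : DTree X μ)
    (q : ℝ) (hq : q ∈ Set.Ioo (0 : ℝ) 1)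
    (φ : X → ℝ) (h0 : ∀ x, 0 ≤ φ x) (hint : Integrable φ μ)
    {ι : Type*} [Countable ι] (I : ι → Set X)
    (hmem : ∀ j, I j ∈ trS μ T φ) (hdisj : Pairwise (Function.onFun Disjoint I))
    (β : ℝ) (hβ : 0 < β) :
    (∫ x in ⋃ j, I j, (trMax μ T φ x) ^ q ∂μ) ≤
      (1 / ((1 - q) * β)) *
        ((β + 1) * (∑' j, (μ (I j)).toReal * trAvg μ φ (I j) ^ q) -
          (β + 1) ^ q * ∫ x in ⋃ j, I j, φ x ^ q ∂μ) := by
  obtain ⟨hq0, hq1⟩ := hq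
  have hc : 0 < (1 - q) * β := mul_pos (sub_pos.2 hq1) hβ
  have hbound := mul_toReal_add_mul_toReal_le hc.le (Real.rpow_nonneg (by linarith) q)
    (by linarith) (tsum_measure_mul_ofReal_trAvg_rpow_ne_top hq0.le hq1.le h0 hint
      (fun j => trS_subset_mem (hmem j)) hdisj)
    (ofReal_mul_setLIntegral_iUnion_rpow_add_le hq0 hq1 h0 hint hmem hdisj hβ.le)
  rw [ENNReal.tsum_toReal_eq fun j => ENNReal.mul_ne_top (measure_ne_top μ _) ENNReal.ofReal_ne_top,
    ← integral_eq_lintegral_of_nonneg_ae (ae_of_all _ fun x => Real.rpow_nonneg trMax_nonneg q)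
      (measurable_trMax.pow_const q).aestronglyMeasurable,
    ← integral_eq_lintegral_of_nonneg_ae (ae_of_all _ fun x => Real.rpow_nonneg (h0 x) q)
      (hint.aemeasurable.pow_const q).aestronglyMeasurable.restrict] at hbound
  simp only [ENNReal.toReal_mul, ENNReal.toReal_ofReal (Real.rpow_nonneg (trAvg_nonneg h0 _) q)]
    at hbound
  rw [one_div, ← div_eq_inv_mul, le_div_iff₀ hc]
  linarith

/-- the basic inequality over a pairwise disjoint family in `S_φ`. -/
theorem statement13 {X : Type*} [MeasurableSpace X] (μ : Measure X)
    [IsProbabilityMeasure μ] [NullSingletonClass μ] (T : DTree X μ)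
    (q : ℝ) (hq : q ∈ Set.Ioo (0 : ℝ) 1)
    (φ : X → ℝ) (h0 : ∀ x, 0 ≤ φ x) (hint : Integrable φ μ) (hgood : TGood μ T φ)
    {ι : Type*} [Countable ι] (I : ι → Set X)
    (hmem : ∀ j, I j ∈ trS μ T φ) (hdisj : Pairwise (Function.onFun Disjoint I))
    (β : ℝ) (hβ : 0 < β) :
    (∫ x in ⋃ j, I j, (trMax μ T φ x) ^ q ∂μ) ≤
      (1 / ((1 - q) * β)) *
        ((β + 1) * (∑' j, (μ (I j)).toReal * trAvg μ φ (I j) ^ q) -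
          (β + 1) ^ q * ∫ x in ⋃ j, I j, φ x ^ q ∂μ) :=
  statement13_general μ T q hq φ h0 hint I hmem hdisj β hβ

end
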